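/- arXiv:1904.06766 — 2 statements merged into one kernel-verified Lean document; each statement's English description precedes it below -/
import Mathlib

section
/- Let A, U and V be standard Borel spaces and let Φ : Multiset U → V be measurable with respect to the counting σ-algebra on Multiset U. Then the group-by aggregation query Q : Multiset (A × U) → Multiset (A × V), defined by Q(D) = the multiset containing, for each distinct first component a occurring in D, exactly one copy of the pair (a, Φ(G_a)), where G_a is the multiset (with multiplicity) of second components u of pairs (a, u) in D, is measurable with respect to the counting σ-algebras on Multiset (A × U) and Multiset (A × V) (for the product measurable structures on A × U and A × V). -/
/- `countIn D E` is the number of elements of the finite multiset `D` lying in the set `E`,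
counted with multiplicity. -/
open Classical in
noncomputable def countIn {X : Type*} (D : Multiset X) (E : Set X) : ℕ :=
  (D.filter (· ∈ E)).card

/-- The counting σ-algebra on the space of finite multisets over a measurable space `X`:
generated by the counting events `C(E,n) = {D | countIn D E = n}` for `E` measurable, `n : ℕ`. -/
def countingMS (X : Type*) [MeasurableSpace X] : MeasurableSpace (Multiset X) :=
  MeasurableSpace.generateFrom
    {C : Set (Multiset X) |
      ∃ (E : Set X) (n : ℕ), MeasurableSet E ∧ C = {D : Multiset X | countIn D E = n}}


/-!
A countably generated space `A` with measurable singletons carries a refining sequence of finite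
measurable partitions that eventually separates any finite set of points. Once the partition at
level `n` separates the keys (distinct first components) of `D`, the number of keys `a` with
`G_a ∈ M` is the number of blocks `C` over which the second components of `D` form a nonempty
multiset in `M`. For fixed `n` that is a finite sum of indicators of measurable events, so the
number of such keys is a pointwise limit of measurable functions. Restricting `D` to the keys in
`S` turns it into the number of pairs of `Q(D)` in `S × T` (take `M = Φ⁻¹ T`), and a π-λ argument
for the finite measures `∑ x ∈ D, δ_x` extends measurability from rectangles to all measurable
subsets of `A × V`.
-/

open MeasureTheory MeasurableSpace Set Filter
open scoped ENNReal

attribute [local instance] countingMS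

section Counting

variable {X : Type*}

open Classical in
lemma countIn_filter (D : Multiset X) (B E : Set X) :
    countIn (D.filter (· ∈ B)) E = countIn D (E ∩ B) := by
  simp only [countIn, Multiset.filter_filter, Set.mem_inter_iff]

variable [MeasurableSpace X]

noncomputable def Multiset.toMeasure (D : Multiset X) : Measure X :=
  (D.map Measure.dirac).sum

lemma Multiset.toMeasure_apply (D : Multiset X) {E : Set X} (hE : MeasurableSet E) :
    D.toMeasure E = countIn D E := by
  classical
  induction D using Multiset.induction with
  | empty => simp [Multiset.toMeasure, countIn]
  | cons x D ih =>
    rw [Multiset.toMeasure, Multiset.map_cons, Multiset.sum_cons, Measure.add_apply,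
      ← Multiset.toMeasure, ih, Measure.dirac_apply' x hE]
    by_cases hx : x ∈ E <;> simp [countIn, hx, add_comm]

instance (D : Multiset X) : IsFiniteMeasure D.toMeasure :=
  ⟨by simp [D.toMeasure_apply MeasurableSet.univ]⟩

lemma measurable_countIn {E : Set X} (hE : MeasurableSet E) : Measurable (countIn · E) :=
  measurable_to_countable' fun n => measurableSet_generateFrom ⟨E, n, hE, rfl⟩

lemma measurable_multiset_of_countIn {Ω : Type*} [MeasurableSpace Ω] {f : Ω → Multiset X}
    (hf : ∀ E, MeasurableSet E → Measurable fun ω => countIn (f ω) E) : Measurable f :=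
  measurable_generateFrom <| by
    rintro _ ⟨E, n, hE, rfl⟩
    exact hf E hE (measurableSet_singleton n)

lemma measurable_multiset_of_toMeasure {Ω : Type*} [MeasurableSpace Ω] {f : Ω → Multiset X}
    (hf : Measurable fun ω => (f ω).toMeasure) : Measurable f :=
  measurable_multiset_of_countIn fun E hE => measurable_to_countable' fun n => by
    have : (fun ω => countIn (f ω) E) ⁻¹' {n} =
        (fun ω => (f ω).toMeasure E) ⁻¹' {(n : ℝ≥0∞)} := by
      ext ω
      simp [Multiset.toMeasure_apply _ hE]
    exact this ▸ (Measure.measurable_coe hE).comp hf (measurableSet_singleton _)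

open Classical in
lemma measurable_filter {B : Set X} (hB : MeasurableSet B) :
    Measurable (Multiset.filter (· ∈ B)) :=
  measurable_multiset_of_countIn fun E hE => by
    simpa only [countIn_filter] using measurable_countIn (hE.inter hB)

end Counting

namespace Multiset

variable {A U V : Type*}

open Classical in
noncomputable def fiber (D : Multiset (A × U)) (a : A) : Multiset U :=
  (D.filter (fun p => p.1 = a)).map Prod.snd

open Classical in
noncomputable def sndOver (D : Multiset (A × U)) (W : Set A) : Multiset U :=
  (D.filter (·.1 ∈ W)).map Prod.snd

open Classical in
noncomputable def keysWithFiberIn (M : Set (Multiset U)) (D : Multiset (A × U)) : Finset A :=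
  (D.map Prod.fst).toFinset.filter (fun a => D.fiber a ∈ M)

open Classical in
noncomputable def groupBy (Φ : Multiset U → V) (D : Multiset (A × U)) : Multiset (A × V) :=
  (D.map Prod.fst).dedup.map (fun a => (a, Φ (D.fiber a)))

lemma fiber_ne_zero_iff {D : Multiset (A × U)} {a : A} :
    D.fiber a ≠ 0 ↔ a ∈ D.map Prod.fst := by
  simp [fiber, filter_eq_nil]

lemma sndOver_ne_zero_iff {D : Multiset (A × U)} {W : Set A} :
    D.sndOver W ≠ 0 ↔ ∃ p ∈ D, p.1 ∈ W := by
  simp [sndOver, filter_eq_nil]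

open Classical in
lemma sndOver_eq_fiber {D : Multiset (A × U)} {W : Set A} {a : A}
    (h : ∀ p ∈ D, p.1 ∈ W ↔ p.1 = a) : D.sndOver W = D.fiber a :=
  congrArg _ (filter_congr h)

lemma countIn_sndOver (D : Multiset (A × U)) (W : Set A) (F : Set U) :
    countIn (D.sndOver W) F = countIn D (W ×ˢ F) := by
  classical
  simp only [countIn, sndOver, filter_map, card_map, filter_filter, Set.mem_prod,
    Function.comp_def, and_comm]

open Classical in
lemma filter_keysWithFiberIn (M : Set (Multiset U)) (D : Multiset (A × U)) (B : Set A) :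
    (D.keysWithFiberIn M).filter (· ∈ B) = (D.filter (·.1 ∈ B)).keysWithFiberIn M := by
  ext a
  by_cases ha : a ∈ B
  · have : (D.filter (·.1 ∈ B)).fiber a = D.fiber a := by
      simp only [fiber, filter_filter]
      exact congrArg _ (filter_congr fun p _ => by aesop)
    simp [keysWithFiberIn, this, ha]
  · simp [keysWithFiberIn, ha]

open Classical in
lemma countIn_groupBy_prod (Φ : Multiset U → V) (D : Multiset (A × U)) (S : Set A)
    (T : Set V) :
    countIn (D.groupBy Φ) (S ×ˢ T) = ((D.keysWithFiberIn (Φ ⁻¹' T)).filter (· ∈ S)).card := by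
  simp [countIn, groupBy, keysWithFiberIn, filter_map, Finset.card_def, filter_filter]

end Multiset

section CountablePartition

variable {α : Type*} [MeasurableSpace α] [CountablyGenerated α]

lemma antitone_countablePartitionSet (a : α) : Antitone (countablePartitionSet · a) := by
  classical
  refine antitone_nat_of_succ_le fun n => ?_
  simp only [countablePartitionSet, memPartitionSet_succ]
  split_ifs
  exacts [inter_subset_left, sdiff_subset]

variable [MeasurableSingletonClass α]

lemma exists_notMem_countablePartitionSet {a b : α} (hab : a ≠ b) :
    ∃ n, b ∉ countablePartitionSet n a := by
  by_contra! h
  have hsame : ∀ s ∈ ⋃ n, countablePartition α n, a ∈ s ↔ b ∈ s := by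
    simp only [mem_iUnion]
    rintro s ⟨n, hs⟩
    rw [← countablePartitionSet_eq_iff a hs, ← countablePartitionSet_eq_iff b hs,
      countablePartitionSet_of_mem (countablePartitionSet_mem n a) (h n)]
  rw [← forall_generateFrom_mem_iff_mem_iff, generateFrom_iUnion_countablePartition] at hsame
  exact hab ((hsame {a} (measurableSet_singleton a)).mp rfl).symm

lemma eventually_injOn_countablePartitionSet {s : Set α} (hs : s.Finite) :
    ∀ᶠ n in atTop, s.InjOn (countablePartitionSet n) := by
  simp only [InjOn]
  rw [eventually_all_finite hs]
  intro a ha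
  rw [eventually_all_finite hs]
  intro b hb
  rcases eq_or_ne a b with rfl | hab
  · exact Eventually.of_forall fun _ _ => rfl
  obtain ⟨N, hN⟩ := exists_notMem_countablePartitionSet hab
  filter_upwards [eventually_ge_atTop N] with n hn heq
  have hb : b ∈ countablePartitionSet n a := heq ▸ mem_countablePartitionSet n b
  exact absurd (antitone_countablePartitionSet a hn hb) hN

end CountablePartition

section GroupBy

open Multiset

variable {A U V : Type*} [MeasurableSpace A]

open Classical in
lemma card_keysWithFiberIn_eq_card_countablePartition [CountablyGenerated A]
    {M : Set (Multiset U)} {D : Multiset (A × U)} {n : ℕ}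
    (hinj : InjOn (countablePartitionSet n) {a | a ∈ D.map Prod.fst}) :
    (D.keysWithFiberIn M).card = ((finite_countablePartition A n).toFinset.filter
      fun C => D.sndOver C ∈ M \ {0}).card := by
  have hfiber : ∀ a ∈ D.map Prod.fst, D.sndOver (countablePartitionSet n a) = D.fiber a :=
    fun a ha => sndOver_eq_fiber fun p hp =>
      ⟨fun hpa => hinj (mem_map_of_mem _ hp) ha
        (countablePartitionSet_of_mem (countablePartitionSet_mem n a) hpa),
      fun h => h ▸ mem_countablePartitionSet n a⟩
  apply Finset.card_bij (fun a _ => countablePartitionSet n a)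
  · intro a ha
    simp only [keysWithFiberIn, Finset.mem_filter, Multiset.mem_toFinset] at ha
    simp [countablePartitionSet_mem, hfiber a ha.1, ha.2, fiber_ne_zero_iff.mpr ha.1]
  · intro a ha b hb h
    simp only [keysWithFiberIn, Finset.mem_filter, Multiset.mem_toFinset] at ha hb
    exact hinj ha.1 hb.1 h
  · intro C hC
    simp only [Finset.mem_filter, Set.Finite.mem_toFinset, Set.mem_sdiff, mem_singleton_iff] at hC
    obtain ⟨p, hp, hpC⟩ := sndOver_ne_zero_iff.mp hC.2.2
    have hCp : countablePartitionSet n p.1 = C := countablePartitionSet_of_mem hC.1 hpC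
    have hkey : p.1 ∈ D.map Prod.fst := mem_map_of_mem _ hp
    refine ⟨p.1, ?_, hCp⟩
    simp [keysWithFiberIn, hkey, ← hfiber _ hkey, hCp, hC.2.1]

variable [MeasurableSpace U] [MeasurableSpace V]

lemma Multiset.measurableSet_singleton_zero : MeasurableSet ({0} : Set (Multiset U)) := by
  have : ({0} : Set (Multiset U)) = (countIn · univ) ⁻¹' {0} := by
    ext G
    simp [countIn]
  exact this ▸ measurable_countIn MeasurableSet.univ (measurableSet_singleton 0)

lemma measurable_sndOver {W : Set A} (hW : MeasurableSet W) :
    Measurable fun D : Multiset (A × U) => D.sndOver W :=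
  measurable_multiset_of_countIn fun F hF => by
    simpa only [countIn_sndOver] using measurable_countIn (hW.prod hF)

lemma measurable_card_keysWithFiberIn [CountablyGenerated A] [MeasurableSingletonClass A]
    {M : Set (Multiset U)} (hM : MeasurableSet M) :
    Measurable fun D : Multiset (A × U) => (D.keysWithFiberIn M).card := by
  classical
  refine measurable_of_tendsto_metrizable (f := fun n D =>
      ((finite_countablePartition A n).toFinset.filter fun C => D.sndOver C ∈ M \ {0}).card)
    (fun n => ?_) (tendsto_pi_nhds.mpr fun D => ?_)
  · simp only [Finset.card_filter]
    refine Finset.measurable_sum _ fun C hC => Measurable.ite ?_ measurable_const measurable_const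
    exact measurable_sndOver (measurableSet_countablePartition n (by simpa using hC))
      (hM.diff measurableSet_singleton_zero)
  · refine tendsto_const_nhds.congr' ?_
    filter_upwards [eventually_injOn_countablePartitionSet (D.map Prod.fst).finite_toSet] with n hn
    exact card_keysWithFiberIn_eq_card_countablePartition hn

open Classical in
lemma measurable_card_filter_keysWithFiberIn [CountablyGenerated A] [MeasurableSingletonClass A]
    {M : Set (Multiset U)} (hM : MeasurableSet M) {S : Set A} (hS : MeasurableSet S) :
    Measurable fun D : Multiset (A × U) => ((D.keysWithFiberIn M).filter (· ∈ S)).card := by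
  simp only [filter_keysWithFiberIn]
  exact (measurable_card_keysWithFiberIn hM).comp (measurable_filter (measurable_fst hS))

lemma measurable_groupBy [CountablyGenerated A] [MeasurableSingletonClass A]
    {Φ : Multiset U → V} (hΦ : Measurable Φ) :
    Measurable (groupBy Φ : Multiset (A × U) → Multiset (A × V)) := by
  have hrect : ∀ S T, MeasurableSet S → MeasurableSet T →
      Measurable fun D : Multiset (A × U) => (D.groupBy Φ).toMeasure (S ×ˢ T) := by
    intro S T hS hT
    simp_rw [toMeasure_apply _ (hS.prod hT), countIn_groupBy_prod]
    exact measurable_from_nat.comp (measurable_card_filter_keysWithFiberIn (hΦ hT) hS)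
  refine measurable_multiset_of_toMeasure
    (Measurable.measure_of_isPiSystem generateFrom_prod.symm isPiSystem_prod ?_ ?_)
  · rintro _ ⟨S, hS, T, hT, rfl⟩
    exact hrect S T hS hT
  · simpa only [univ_prod_univ] using hrect univ univ MeasurableSet.univ MeasurableSet.univ

end GroupBy

open Classical in
theorem groupByAggregation_measurable_general {A U V : Type*}
    [MeasurableSpace A] [StandardBorelSpace A]
    [MeasurableSpace U]
    [MeasurableSpace V]
    (Φ : Multiset U → V) (hΦ : @Measurable _ _ (countingMS U) _ Φ) :
    @Measurable _ _ (countingMS (A × U)) (countingMS (A × V))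
      (fun D : Multiset (A × U) =>
        (D.map Prod.fst).dedup.map
          (fun a => (a, Φ ((D.filter (fun p => p.1 = a)).map Prod.snd)))) :=
  measurable_groupBy hΦ

open Classical in
theorem groupByAggregation_measurable {A U V : Type*}
    [MeasurableSpace A] [StandardBorelSpace A]
    [MeasurableSpace U] [StandardBorelSpace U]
    [MeasurableSpace V] [StandardBorelSpace V]
    (Φ : Multiset U → V) (hΦ : @Measurable _ _ (countingMS U) _ Φ) :
    @Measurable _ _ (countingMS (A × U)) (countingMS (A × V))
      (fun D : Multiset (A × U) =>
        (D.map Prod.fst).dedup.map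
          (fun a => (a, Φ ((D.filter (fun p => p.1 = a)).map Prod.snd)))) :=
  groupByAggregation_measurable_general Φ hΦ
end

section
/- Let X and Y be standard Borel spaces, and for each i ∈ ℕ let Qᵢ : Multiset X → Multiset Y be measurable with respect to the counting σ-algebras, with every Qᵢ(D) having no repeated elements (set semantics). Suppose Q : Multiset X → Multiset Y is a function such that for every D, Q(D) has no repeated elements and for every y ∈ Y, y occurs in Q(D) if and only if y occurs in Qᵢ(D) for some i (so the union ⋃ᵢ Qᵢ(D) is finite and equals Q(D) as a set). Then Q is measurable with respect to the counting σ-algebras. (Consequently, every datalog query, being a countable union of measurable conjunctive queries, is measurable.) -/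
open MeasurableSpace

open Classical in
lemma countIn_cons' {Z : Type*} (a : Z) (D : Multiset Z) (E : Set Z) :
    countIn (a ::ₘ D) E = countIn D E + (if a ∈ E then 1 else 0) := by
  simp only [countIn, Multiset.filter_cons]
  split_ifs with h <;> simp

lemma countIn_pos' {Z : Type*} {D : Multiset Z} {E : Set Z} :
    0 < countIn D E ↔ ∃ y ∈ D, y ∈ E := by
  simp only [countIn, Multiset.card_pos_iff_exists_mem, Multiset.mem_filter]

open Classical in
lemma countIn_le_one' {Z : Type*} {D : Multiset Z} {E : Set Z} (hD : D.Nodup)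
    (h : ∀ y ∈ D, ∀ y' ∈ D, y ∈ E → y' ∈ E → y = y') : countIn D E ≤ 1 := by
  have hnd : (D.filter (· ∈ E)).Nodup := hD.filter _
  have h1 : (⟨D.filter (· ∈ E), hnd⟩ : Finset Z).card ≤ 1 := by
    apply Finset.card_le_one.mpr
    intro a ha b hb
    simp only [Finset.mem_mk, Multiset.mem_filter] at ha hb
    exact h a ha.1 b hb.1 ha.2 hb.2
  simpa [countIn, Finset.card] using h1

lemma countIn_partition' {Z : Type*} {ι : Type*} [Fintype ι] (D : Multiset Z) (E : Set Z)
    (P : ι → Set Z) (hPE : ∀ b, P b ⊆ E) (hP : ∀ y ∈ E, ∃! b, y ∈ P b) :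
    countIn D E = ∑ b, countIn D (P b) := by
  induction D using Multiset.induction with
  | empty => simp [countIn]
  | cons a D ih =>
    simp only [countIn_cons', ih, Finset.sum_add_distrib]
    congr 1
    by_cases ha : a ∈ E
    · obtain ⟨b0, hb0, huniq⟩ := hP a ha
      rw [if_pos ha, Finset.sum_eq_single b0]
      · rw [if_pos hb0]
      · intro b _ hne
        rw [if_neg]
        exact fun hmem => hne (huniq b hmem)
      · simp
    · rw [if_neg ha, Finset.sum_eq_zero]
      exact fun b _ => if_neg fun hmem => ha (hPE b hmem)

lemma measurable_countIn' {Z : Type*} [MeasurableSpace Z] {E : Set Z} (hE : MeasurableSet E) :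
    @Measurable _ _ (countingMS Z) _ (fun D => countIn D E) := by
  apply @measurable_to_countable' _ _ _ _ (countingMS Z)
  intro n
  exact measurableSet_generateFrom ⟨E, n, hE, rfl⟩

theorem countableUnion_query_measurable
    {X Y : Type*} [MeasurableSpace X] [StandardBorelSpace X]
    [MeasurableSpace Y] [StandardBorelSpace Y]
    (Qi : ℕ → Multiset X → Multiset Y)
    (hQi : ∀ i, @Measurable _ _ (countingMS X) (countingMS Y) (Qi i))
    (hQiNodup : ∀ i D, (Qi i D).Nodup)
    (Q : Multiset X → Multiset Y)
    (hQNodup : ∀ D, (Q D).Nodup)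
    (hQmem : ∀ (D : Multiset X) (y : Y), y ∈ Q D ↔ ∃ i, y ∈ Qi i D) :
    @Measurable _ _ (countingMS X) (countingMS Y) Q := by
  classical
  haveI : SeparatesPoints Y :=
    ⟨fun x y h => (Set.mem_singleton_iff.mp (h {x} (measurableSet_singleton x) rfl)).symm⟩
  obtain ⟨e, he_meas, he_sep⟩ := exists_seq_separating Y MeasurableSet.empty Set.univ
  refine @measurable_generateFrom _ _ (countingMS X) _ Q ?_
  rintro _ ⟨E, n, hE, rfl⟩
  set cell : (m : ℕ) → (Fin m → Bool) → Set Y :=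
    fun m b => E ∩ ⋂ k : Fin m, (if b k then e k else (e k)ᶜ) with hcell
  have mem_cell : ∀ (m : ℕ) (b : Fin m → Bool) (y : Y),
      y ∈ cell m b ↔ y ∈ E ∧ ∀ k : Fin m, (y ∈ e k ↔ b k = true) := by
    intro m b y
    simp only [hcell, Set.mem_inter_iff, Set.mem_iInter]
    refine and_congr_right fun _ => forall_congr' fun k => ?_
    by_cases hbk : b k <;> simp [hbk]
  have cell_meas : ∀ (m : ℕ) (b : Fin m → Bool), MeasurableSet (cell m b) := by
    intro m b
    refine hE.inter (MeasurableSet.iInter fun k => ?_)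
    by_cases hb : b k
    · simpa [hb] using he_meas k
    · simpa [hb] using (he_meas k).compl
  have cell_sub : ∀ (m : ℕ) (b : Fin m → Bool), cell m b ⊆ E := fun m b => Set.inter_subset_left
  have cell_uniq : ∀ (m : ℕ) (y : Y), y ∈ E → ∃! b : Fin m → Bool, y ∈ cell m b := by
    intro m y hy
    refine ⟨fun k => decide (y ∈ e k), (mem_cell _ _ _).mpr ⟨hy, fun k => by simp⟩, ?_⟩
    intro b hb
    rw [mem_cell] at hb
    funext k
    have hk := hb.2 k
    by_cases hyk : y ∈ e k <;> simp [hyk] at hk ⊢ <;> simp [hk]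
  set h : ℕ → ℕ → Multiset X → ℕ :=
    fun N m D => ∑ b : Fin m → Bool,
      min 1 (∑ i ∈ Finset.range N, countIn (Qi i D) (cell m b)) with hh
  have h_le : ∀ N m D, h N m D ≤ countIn (Q D) E := by
    intro N m D
    rw [countIn_partition' (Q D) E (cell m) (cell_sub m) (cell_uniq m)]
    apply Finset.sum_le_sum
    intro b _
    rcases Nat.eq_zero_or_pos (∑ i ∈ Finset.range N, countIn (Qi i D) (cell m b))
      with h0 | hpos
    · simp [h0]
    · obtain ⟨i, hi, hposi⟩ : ∃ i ∈ Finset.range N, 0 < countIn (Qi i D) (cell m b) := by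
        by_contra hc
        push_neg at hc
        exact hpos.ne' (Finset.sum_eq_zero fun i hi => Nat.le_zero.mp (hc i hi))
      obtain ⟨y, hyQ, hyc⟩ := countIn_pos'.mp hposi
      have hyQD : y ∈ Q D := (hQmem D y).mpr ⟨i, hyQ⟩
      calc min 1 (∑ i ∈ Finset.range N, countIn (Qi i D) (cell m b)) ≤ 1 := min_le_left _ _
        _ ≤ countIn (Q D) (cell m b) := countIn_pos'.mpr ⟨y, hyQD, hyc⟩
  have h_ex : ∀ D, ∃ N m, h N m D = countIn (Q D) E := by
    intro D
    set T := (Q D).toFinset with hT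
    set N := 1 + T.sup (fun y => if hy : ∃ i, y ∈ Qi i D then Nat.find hy else 0) with hN
    have hNwit : ∀ y ∈ Q D, ∃ i < N, y ∈ Qi i D := by
      intro y hy
      have hy' : ∃ i, y ∈ Qi i D := (hQmem D y).mp hy
      refine ⟨Nat.find hy', ?_, Nat.find_spec hy'⟩
      have hle : (if hy2 : ∃ i, y ∈ Qi i D then Nat.find hy2 else 0) ≤
          T.sup (fun y => if hy : ∃ i, y ∈ Qi i D then Nat.find hy else 0) :=
        Finset.le_sup (f := fun y => if hy : ∃ i, y ∈ Qi i D then Nat.find hy else 0)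
          (Multiset.mem_toFinset.mpr hy)
      rw [dif_pos hy'] at hle
      omega
    have hsep' : ∀ y y' : Y, y ≠ y' → ∃ k, ¬ (y ∈ e k ↔ y' ∈ e k) := by
      intro y y' hne
      by_contra hc
      push_neg at hc
      exact hne (he_sep y trivial y' trivial hc)
    set m := 1 + (T ×ˢ T).sup
        (fun p => if hp : ∃ k, ¬ (p.1 ∈ e k ↔ p.2 ∈ e k) then Nat.find hp else 0) with hm
    have hmwit : ∀ y ∈ Q D, ∀ y' ∈ Q D, y ≠ y' → ∃ k < m, ¬ (y ∈ e k ↔ y' ∈ e k) := by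
      intro y hy y' hy' hne
      have hp : ∃ k, ¬ (y ∈ e k ↔ y' ∈ e k) := hsep' y y' hne
      refine ⟨Nat.find hp, ?_, Nat.find_spec hp⟩
      have hle : (if hp2 : ∃ k, ¬ (y ∈ e k ↔ y' ∈ e k) then Nat.find hp2 else 0) ≤
          (T ×ˢ T).sup
            (fun p => if hp : ∃ k, ¬ (p.1 ∈ e k ↔ p.2 ∈ e k) then Nat.find hp else 0) :=
        Finset.le_sup
          (f := fun p => if hp : ∃ k, ¬ (p.1 ∈ e k ↔ p.2 ∈ e k) then Nat.find hp else 0)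
          (b := (y, y'))
          (Finset.mem_product.mpr
          ⟨Multiset.mem_toFinset.mpr hy, Multiset.mem_toFinset.mpr hy'⟩)
      rw [dif_pos hp] at hle
      omega
    refine ⟨N, m, ?_⟩
    rw [countIn_partition' (Q D) E (cell m) (cell_sub m) (cell_uniq m), hh]
    apply Finset.sum_congr rfl
    intro b _
    rcases Nat.eq_zero_or_pos (countIn (Q D) (cell m b)) with h0 | hpos
    · rw [h0]
      have hz : ∀ i ∈ Finset.range N, countIn (Qi i D) (cell m b) = 0 := by
        intro i _
        by_contra hc
        obtain ⟨y, hyQ, hyc⟩ := countIn_pos'.mp (Nat.pos_of_ne_zero hc)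
        have hyQD : y ∈ Q D := (hQmem D y).mpr ⟨i, hyQ⟩
        have := countIn_pos'.mpr ⟨y, hyQD, hyc⟩
        omega
      rw [Finset.sum_eq_zero hz]
      simp
    · have hle1 : countIn (Q D) (cell m b) ≤ 1 := by
        apply countIn_le_one' (hQNodup D)
        intro y hy y' hy' hyc hyc'
        by_contra hne
        obtain ⟨k, hk, hkne⟩ := hmwit y hy y' hy' hne
        rw [mem_cell] at hyc hyc'
        exact hkne (by rw [hyc.2 ⟨k, hk⟩, hyc'.2 ⟨k, hk⟩])
      have heq1 : countIn (Q D) (cell m b) = 1 := le_antisymm hle1 hpos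
      rw [heq1]
      obtain ⟨y, hyQD, hyc⟩ := countIn_pos'.mp hpos
      obtain ⟨i, hiN, hyQi⟩ := hNwit y hyQD
      have hge : 1 ≤ ∑ i ∈ Finset.range N, countIn (Qi i D) (cell m b) :=
        le_trans (countIn_pos'.mpr ⟨y, hyQi, hyc⟩)
          (Finset.single_le_sum (f := fun i => countIn (Qi i D) (cell m b))
            (fun _ _ => Nat.zero_le _) (Finset.mem_range.mpr hiN))
      exact min_eq_left hge
  have h_meas : ∀ N m, @Measurable _ _ (countingMS X) _ (h N m) := by
    intro N m
    apply Finset.measurable_sum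
    intro b _
    exact measurable_const.min (Finset.measurable_sum _ fun i _ =>
      (measurable_countIn' (cell_meas m b)).comp (hQi i))
  have hset : Q ⁻¹' {D | countIn D E = n} =
      (⋃ N, ⋃ m, {D | h N m D = n}) ∩ ⋂ N, ⋂ m, {D | h N m D ≤ n} := by
    ext D
    simp only [Set.mem_preimage, Set.mem_setOf_eq, Set.mem_inter_iff, Set.mem_iUnion,
      Set.mem_iInter]
    constructor
    · intro hD
      obtain ⟨N, m, heq⟩ := h_ex D
      exact ⟨⟨N, m, heq.trans hD⟩, fun N m => hD ▸ h_le N m D⟩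
    · rintro ⟨⟨N, m, hNm⟩, hub⟩
      obtain ⟨N', m', heq⟩ := h_ex D
      have h1 : n ≤ countIn (Q D) E := hNm ▸ h_le N m D
      have h2 : countIn (Q D) E ≤ n := heq ▸ hub N' m'
      omega
  rw [hset]
  exact ((MeasurableSet.iUnion fun N => MeasurableSet.iUnion fun m =>
      (h_meas N m) (measurableSet_singleton n)).inter
    (MeasurableSet.iInter fun N => MeasurableSet.iInter fun m =>
      (h_meas N m) (Set.finite_Iic n).measurableSet))
end
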